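/- arXiv:1909.13600 — 4 statements merged into one kernel-verified Lean document; each statement's English description precedes it below -/
import Mathlib

section
/- (Case of Lemma 3: overflow only on the right.) Let Δ ≥ 0 and let L, U, ℓ ∈ ℝ with ℓ − Δ ≤ L ≤ ℓ + Δ < U. Then the symbolic loss, which in this case is the distance from the midpoint (ℓ + Δ + U)/2 of the overflowing interval [ℓ + Δ, U] to the tolerance interval, satisfies infDist((ℓ + Δ + U)/2, Icc(ℓ − Δ, ℓ + Δ)) = (1/2)·(e_Δ(L, ℓ) + e_Δ(U, ℓ)). -/
/-! For `Δ ≥ 0` the tolerance error `tolErr Δ p ℓ` is the distance from `p` to the tolerance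
interval `[ℓ - Δ, ℓ + Δ]`. Here `L` lies in that interval while `U` and the midpoint
`(ℓ + Δ + U) / 2` lie to its right, so both sides equal `(U - (ℓ + Δ)) / 2`. -/

/-- Tolerance error between a prediction `p` and a label `ℓ` with tolerance `Δ`:
`0` if `|p - ℓ| ≤ Δ`, otherwise the minimum of the distances to the shifted labels. -/
noncomputable def tolErr (Δ p ℓ : ℝ) : ℝ :=
  if |p - ℓ| ≤ Δ then 0 else min |p - (ℓ - Δ)| |p - (ℓ + Δ)|

namespace Real

theorem infDist_Icc_of_le {a b x : ℝ} (hab : a ≤ b) (hbx : b ≤ x) :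
    Metric.infDist x (Set.Icc a b) = x - b := by
  apply le_antisymm
  · simpa [Real.dist_eq, abs_of_nonneg (sub_nonneg.2 hbx)] using
      Metric.infDist_le_dist_of_mem (x := x) (Set.right_mem_Icc.2 hab)
  · refine (Metric.le_infDist (Set.nonempty_Icc.2 hab)).2 fun y hy => ?_
    rw [Real.dist_eq, abs_of_nonneg (by linarith [hy.2])]
    linarith [hy.2]

theorem infDist_Icc_of_ge {a b x : ℝ} (hab : a ≤ b) (hxa : x ≤ a) :
    Metric.infDist x (Set.Icc a b) = a - x := by
  apply le_antisymm
  · simpa [Real.dist_eq, abs_of_nonpos (sub_nonpos.2 hxa)] using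
      Metric.infDist_le_dist_of_mem (x := x) (Set.left_mem_Icc.2 hab)
  · refine (Metric.le_infDist (Set.nonempty_Icc.2 hab)).2 fun y hy => ?_
    rw [Real.dist_eq, abs_of_nonpos (by linarith [hy.1])]
    linarith [hy.1]

end Real

theorem tolErr_eq_infDist {Δ p ℓ : ℝ} (hΔ : 0 ≤ Δ) :
    tolErr Δ p ℓ = Metric.infDist p (Set.Icc (ℓ - Δ) (ℓ + Δ)) := by
  have hI : ℓ - Δ ≤ ℓ + Δ := by linarith
  unfold tolErr
  split_ifs with hp
  · obtain ⟨hlo, hhi⟩ := abs_le.1 hp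
    exact (Metric.infDist_zero_of_mem (Set.mem_Icc.2 ⟨by linarith, by linarith⟩)).symm
  · rcases lt_abs.1 (not_le.1 hp) with hright | hleft
    · rw [Real.infDist_Icc_of_le hI (by linarith), abs_of_pos (by linarith),
        abs_of_pos (by linarith), min_eq_right (by linarith)]
    · rw [Real.infDist_Icc_of_ge hI (by linarith), abs_of_neg (by linarith),
        abs_of_neg (by linarith), min_eq_left (by linarith)]
      ring

/-- Lemma 3, case: overflow only on the right. -/
theorem symbolic_loss_case_right_overflow (Δ L U ℓ : ℝ) (hΔ : 0 ≤ Δ)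
    (h1 : ℓ - Δ ≤ L) (h2 : L ≤ ℓ + Δ) (h3 : ℓ + Δ < U) :
    Metric.infDist ((ℓ + Δ + U) / 2) (Set.Icc (ℓ - Δ) (ℓ + Δ)) =
      (1 / 2) * (tolErr Δ L ℓ + tolErr Δ U ℓ) := by
  have hI : ℓ - Δ ≤ ℓ + Δ := h1.trans h2
  rw [tolErr_eq_infDist hΔ, tolErr_eq_infDist hΔ,
    Metric.infDist_zero_of_mem (Set.mem_Icc.2 ⟨h1, h2⟩), Real.infDist_Icc_of_le hI h3.le, Real.infDist_Icc_of_le hI (by linarith)]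
  ring
end

section
/- (Case of Lemma 3: overflow only on the left.) Let Δ ≥ 0 and let L, U, ℓ ∈ ℝ with L < ℓ − Δ ≤ U ≤ ℓ + Δ. Then the symbolic loss, which in this case is the distance from the midpoint (L + (ℓ − Δ))/2 of the overflowing interval [L, ℓ − Δ] to the tolerance interval, satisfies infDist((L + (ℓ − Δ))/2, Icc(ℓ − Δ, ℓ + Δ)) = (1/2)·(e_Δ(L, ℓ) + e_Δ(U, ℓ)). -/
lemma Real.infDist_eq_sub_of_isLeast {s : Set ℝ} {a x : ℝ} (ha : IsLeast s a) (hx : x ≤ a) :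
    Metric.infDist x s = a - x := by
  apply le_antisymm
  · simpa [Real.dist_eq, abs_of_nonpos (sub_nonpos.2 hx)] using
      Metric.infDist_le_dist_of_mem (x := x) ha.1
  · refine (Metric.le_infDist ⟨a, ha.1⟩).2 fun y hy => ?_
    rw [Real.dist_eq, abs_sub_comm]
    exact (sub_le_sub_right (ha.2 hy) x).trans (le_abs_self _)

lemma Real.infDist_Icc_of_le_s9 {a b x : ℝ} (hab : a ≤ b) (hx : x ≤ a) :
    Metric.infDist x (Set.Icc a b) = a - x :=
  Real.infDist_eq_sub_of_isLeast (isLeast_Icc hab) hx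

lemma tolErr_of_mem_Icc {Δ p ℓ : ℝ} (hp : p ∈ Set.Icc (ℓ - Δ) (ℓ + Δ)) : tolErr Δ p ℓ = 0 :=
  if_pos (abs_sub_le_iff.2 ⟨by linarith [hp.2], by linarith [hp.1]⟩)

lemma tolErr_of_lt_sub {Δ p ℓ : ℝ} (hΔ : 0 ≤ Δ) (hp : p < ℓ - Δ) :
    tolErr Δ p ℓ = ℓ - Δ - p := by
  have hout : ¬|p - ℓ| ≤ Δ := fun h => by linarith [(abs_le.1 h).1]
  rw [tolErr, if_neg hout, abs_of_neg (by linarith), abs_of_neg (by linarith),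
    min_eq_left (by linarith)]
  ring

theorem symbolic_loss_case_left_overflow_general (Δ L U ℓ : ℝ)
    (h1 : L < ℓ - Δ) (h2 : ℓ - Δ ≤ U) (h3 : U ≤ ℓ + Δ) :
    Metric.infDist ((L + (ℓ - Δ)) / 2) (Set.Icc (ℓ - Δ) (ℓ + Δ)) =
      (1 / 2) * (tolErr Δ L ℓ + tolErr Δ U ℓ) := by
  have hΔ : 0 ≤ Δ := by linarith
  rw [Real.infDist_Icc_of_le_s9 (by linarith) (by linarith), tolErr_of_lt_sub hΔ h1,
    tolErr_of_mem_Icc ⟨h2, h3⟩]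
  ring

/-- Lemma 3, case: overflow only on the left. -/
theorem symbolic_loss_case_left_overflow (Δ L U ℓ : ℝ) (hΔ : 0 ≤ Δ)
    (h1 : L < ℓ - Δ) (h2 : ℓ - Δ ≤ U) (h3 : U ≤ ℓ + Δ) :
    Metric.infDist ((L + (ℓ - Δ)) / 2) (Set.Icc (ℓ - Δ) (ℓ + Δ)) =
      (1 / 2) * (tolErr Δ L ℓ + tolErr Δ U ℓ) :=
  symbolic_loss_case_left_overflow_general Δ L U ℓ h1 h2 h3
end

section
/- (Lemma 5, single data point version.) Let h : (Fin m → ℝ) → (Fin d → ℝ) be any function (the composition of the network layers from layer l̃ to the output layer), let fv : Fin m → ℝ be a feature vector, κ ≥ 0 a perturbation amount, Δ : Fin d → ℝ a tolerance with Δ j ≥ 0 for all j, ℓ : Fin d → ℝ a label, and L, U : Fin d → ℝ an output bound. Assume (soundness) for every v : Fin m → ℝ with |v i − fv i| ≤ κ for all i, one has L j ≤ h(v) j ≤ U j for all j; and (zero symbolic loss) for every j, (1/2)·(e_{Δ j}(L j, ℓ j) + e_{Δ j}(U j, ℓ j)) = 0. Then for every fv' : Fin m → ℝ with |fv' i − fv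 i| ≤ κ for all i, the output satisfies ℓ j − Δ j ≤ h(fv') j ≤ ℓ j + Δ j for all j. -/
lemma tolErr_nonneg (Δ p ℓ : ℝ) : 0 ≤ tolErr Δ p ℓ := by
  unfold tolErr
  split_ifs
  exacts [le_rfl, le_min (abs_nonneg _) (abs_nonneg _)]

lemma tolErr_eq_zero_iff {Δ p ℓ : ℝ} (hΔ : 0 ≤ Δ) : tolErr Δ p ℓ = 0 ↔ |p - ℓ| ≤ Δ := by
  refine ⟨fun h0 => ?_, fun hnear => if_pos hnear⟩
  by_contra hfar
  rw [tolErr, if_neg hfar] at h0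
  -- outside the tolerance band `p` is neither endpoint `ℓ ∓ Δ`, so both distances are positive
  have hlo : p - (ℓ - Δ) ≠ 0 := fun he => hfar <| by
    rw [show p - ℓ = -Δ by linarith, abs_neg, abs_of_nonneg hΔ]
  have hhi : p - (ℓ + Δ) ≠ 0 := fun he => hfar <| by
    rw [show p - ℓ = Δ by linarith, abs_of_nonneg hΔ]
  exact (lt_min (abs_pos.mpr hlo) (abs_pos.mpr hhi)).ne' h0

lemma tolErr_eq_zero_of_half_add_eq_zero {Δ p q ℓ : ℝ}
    (h : (1 / 2) * (tolErr Δ p ℓ + tolErr Δ q ℓ) = 0) :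
    tolErr Δ p ℓ = 0 ∧ tolErr Δ q ℓ = 0 :=
  (add_eq_zero_iff_of_nonneg (tolErr_nonneg Δ p ℓ) (tolErr_nonneg Δ q ℓ)).mp
    ((mul_eq_zero.mp h).resolve_left one_half_pos.ne')

lemma mem_Icc_of_tolErr_eq_zero {Δ ℓ L U y : ℝ} (hΔ : 0 ≤ Δ)
    (hL : tolErr Δ L ℓ = 0) (hU : tolErr Δ U ℓ = 0) (hLy : L ≤ y) (hyU : y ≤ U) :
    y ∈ Set.Icc (ℓ - Δ) (ℓ + Δ) := by
  have hL' := abs_le.mp ((tolErr_eq_zero_iff hΔ).mp hL)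
  have hU' := abs_le.mp ((tolErr_eq_zero_iff hΔ).mp hU)
  constructor <;> linarith [hL'.1, hU'.2]

theorem provable_robustness_single_general (m d : ℕ)
    (h : (Fin m → ℝ) → (Fin d → ℝ)) (fv : Fin m → ℝ) (κ : ℝ)
    (Δ : Fin d → ℝ) (hΔ : ∀ j, 0 ≤ Δ j) (ℓ : Fin d → ℝ) (L U : Fin d → ℝ)
    (hsound : ∀ v : Fin m → ℝ, (∀ i, |v i - fv i| ≤ κ) →
      ∀ j, L j ≤ h v j ∧ h v j ≤ U j)
    (hloss : ∀ j, (1 / 2) * (tolErr (Δ j) (L j) (ℓ j) + tolErr (Δ j) (U j) (ℓ j)) = 0) :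
    ∀ fv' : Fin m → ℝ, (∀ i, |fv' i - fv i| ≤ κ) →
      ∀ j, ℓ j - Δ j ≤ h fv' j ∧ h fv' j ≤ ℓ j + Δ j := by
  intro fv' hfv' j
  obtain ⟨hL, hU⟩ := tolErr_eq_zero_of_half_add_eq_zero (hloss j)
  obtain ⟨hLy, hyU⟩ := hsound fv' hfv' j
  exact mem_Icc_of_tolErr_eq_zero (hΔ j) hL hU hLy hyU

/-- Lemma 5 (single data point): zero symbolic loss of a sound output bound guarantees
that any feature-level perturbation bounded by `κ` produces output within tolerance. -/
theorem provable_robustness_single (m d : ℕ)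
    (h : (Fin m → ℝ) → (Fin d → ℝ)) (fv : Fin m → ℝ) (κ : ℝ) (hκ : 0 ≤ κ)
    (Δ : Fin d → ℝ) (hΔ : ∀ j, 0 ≤ Δ j) (ℓ : Fin d → ℝ) (L U : Fin d → ℝ)
    (hsound : ∀ v : Fin m → ℝ, (∀ i, |v i - fv i| ≤ κ) →
      ∀ j, L j ≤ h v j ∧ h v j ≤ U j)
    (hloss : ∀ j, (1 / 2) * (tolErr (Δ j) (L j) (ℓ j) + tolErr (Δ j) (U j) (ℓ j)) = 0) :
    ∀ fv' : Fin m → ℝ, (∀ i, |fv' i - fv i| ≤ κ) →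
      ∀ j, ℓ j - Δ j ≤ h fv' j ∧ h fv' j ≤ ℓ j + Δ j :=
  provable_robustness_single_general m d h fv κ Δ hΔ ℓ L U hsound hloss
end

section
/- (Lemma 5, dataset version.) Let h : (Fin m → ℝ) → (Fin d → ℝ) be any function, κ ≥ 0, and Δ : Fin d → ℝ with Δ j ≥ 0 for all j. Let a training set be given by features fv : Fin N → (Fin m → ℝ) and labels ℓ : Fin N → (Fin d → ℝ) with N > 0, together with output bounds L, U : Fin N → (Fin d → ℝ) satisfying the soundness condition: for every i and every v : Fin m → ℝ with |v k − fv i k| ≤ κ for all k, one has L i j ≤ h(v) j ≤ U i j for all j. If the symbolic tolerance loss vanishes, i.e. (1/N) · Σ_{i} Σ_{j} ((1/2)·(e_{Δ j}(L i j, ℓ i j) + e_{Δ j}(U i j, ℓ i j)))² = 0, then for every input fv' : Fin m → ℝ for which there exists i with |fv' k − fv i k| ≤ κ for all k, the output satisfies ℓ i j − Δ j ≤ h(fv') j ≤ ℓ i j + Δ j for all j. -/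
noncomputable def symbolicLoss (Δ L U ℓ : ℝ) : ℝ :=
  (1 / 2) * (tolErr Δ L ℓ + tolErr Δ U ℓ)

lemma symbolicLoss_eq_zero_iff {Δ L U ℓ : ℝ} (hΔ : 0 ≤ Δ) :
    symbolicLoss Δ L U ℓ = 0 ↔ |L - ℓ| ≤ Δ ∧ |U - ℓ| ≤ Δ := by
  rw [← tolErr_eq_zero_iff hΔ, ← tolErr_eq_zero_iff hΔ, symbolicLoss, mul_eq_zero,
    add_eq_zero_iff_of_nonneg (tolErr_nonneg _ _ _) (tolErr_nonneg _ _ _)]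
  norm_num

lemma eq_zero_of_mul_sum_sum_sq_eq_zero {ι κ : Type*} [Fintype ι] [Fintype κ]
    {c : ℝ} (hc : c ≠ 0) {f : ι → κ → ℝ} (h : c * ∑ i, ∑ j, f i j ^ 2 = 0) (i : ι) (j : κ) :
    f i j = 0 := by
  have hsum := (mul_eq_zero.mp h).resolve_left hc
  rw [Fintype.sum_eq_zero_iff_of_nonneg fun _ => Fintype.sum_nonneg fun _ => sq_nonneg _] at hsum
  have hrow := congrFun hsum i
  rw [Pi.zero_apply, Fintype.sum_eq_zero_iff_of_nonneg fun _ => sq_nonneg _] at hrow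
  exact pow_eq_zero_iff two_ne_zero |>.mp (congrFun hrow j)

theorem provable_robustness_dataset_general (m d N : ℕ)
    (h : (Fin m → ℝ) → (Fin d → ℝ)) (κ : ℝ)
    (Δ : Fin d → ℝ) (hΔ : ∀ j, 0 ≤ Δ j)
    (fv : Fin N → (Fin m → ℝ)) (ℓ : Fin N → (Fin d → ℝ))
    (L U : Fin N → (Fin d → ℝ))
    (hsound : ∀ i, ∀ v : Fin m → ℝ, (∀ k, |v k - fv i k| ≤ κ) →
      ∀ j, L i j ≤ h v j ∧ h v j ≤ U i j)
    (hloss : (1 / (N : ℝ)) * ∑ i : Fin N, ∑ j : Fin d,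
      ((1 / 2) * (tolErr (Δ j) (L i j) (ℓ i j) + tolErr (Δ j) (U i j) (ℓ i j))) ^ 2 = 0) :
    ∀ fv' : Fin m → ℝ, ∀ i : Fin N, (∀ k, |fv' k - fv i k| ≤ κ) →
      ∀ j, ℓ i j - Δ j ≤ h fv' j ∧ h fv' j ≤ ℓ i j + Δ j := by
  intro fv' i hclose j
  have hN : (1 / (N : ℝ)) ≠ 0 := one_div_ne_zero (Nat.cast_ne_zero.mpr i.pos.ne')
  have hzero : symbolicLoss (Δ j) (L i j) (U i j) (ℓ i j) = 0 :=
    eq_zero_of_mul_sum_sum_sq_eq_zero (f := fun i j => symbolicLoss (Δ j) (L i j) (U i j) (ℓ i j))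
      hN hloss i j
  obtain ⟨hLℓ, hUℓ⟩ := (symbolicLoss_eq_zero_iff (hΔ j)).mp hzero
  obtain ⟨hLh, hhU⟩ := hsound i fv' hclose j
  rw [abs_le] at hLℓ hUℓ
  constructor <;> linarith

/-- Lemma 5 (dataset version): if the symbolic tolerance loss on the training set is zero,
then any input whose feature vector is `κ`-close to a training feature vector produces
output within the tolerance of the corresponding label. -/
theorem provable_robustness_dataset (m d N : ℕ) (hN : 0 < N)
    (h : (Fin m → ℝ) → (Fin d → ℝ)) (κ : ℝ) (hκ : 0 ≤ κ)
    (Δ : Fin d → ℝ) (hΔ : ∀ j, 0 ≤ Δ j)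
    (fv : Fin N → (Fin m → ℝ)) (ℓ : Fin N → (Fin d → ℝ))
    (L U : Fin N → (Fin d → ℝ))
    (hsound : ∀ i, ∀ v : Fin m → ℝ, (∀ k, |v k - fv i k| ≤ κ) →
      ∀ j, L i j ≤ h v j ∧ h v j ≤ U i j)
    (hloss : (1 / (N : ℝ)) * ∑ i : Fin N, ∑ j : Fin d,
      ((1 / 2) * (tolErr (Δ j) (L i j) (ℓ i j) + tolErr (Δ j) (U i j) (ℓ i j))) ^ 2 = 0) :
    ∀ fv' : Fin m → ℝ, ∀ i : Fin N, (∀ k, |fv' k - fv i k| ≤ κ) →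
      ∀ j, ℓ i j - Δ j ≤ h fv' j ∧ h fv' j ≤ ℓ i j + Δ j :=
  provable_robustness_dataset_general m d N h κ Δ hΔ fv ℓ L U hsound hloss
end
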